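/- Let V be a vector space of dimension n > 2 over an algebraically closed field k, and let x, y ∈ GL(V) each have a minimal polynomial of degree two. Then the subgroup generated by x and y acts reducibly on V, i.e., there is a nonzero proper subspace of V invariant under both x and y. -/
import Mathlib

open Module Polynomial

lemma quad_factor {k A : Type*} [Field k] [IsAlgClosed k] [Ring A] [Algebra k A]
    [FiniteDimensional k A] [Nontrivial A] (z : A) (hz : (minpoly k z).natDegree = 2) :
    ∃ a b : k, (z - algebraMap k A a) ≠ 0 ∧
      (z - algebraMap k A b) * (z - algebraMap k A a) = 0 := by
  have hint : IsIntegral k z := .of_finite k z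
  have hmon : (minpoly k z).Monic := minpoly.monic hint
  have hne : minpoly k z ≠ 0 := hmon.ne_zero
  have hdeg : (minpoly k z).degree = 2 := by
    rw [degree_eq_natDegree hne, hz]; rfl
  obtain ⟨a, ha⟩ := IsAlgClosed.exists_root (minpoly k z) (by rw [hdeg]; simp)
  have hdvd : X - C a ∣ minpoly k z := dvd_iff_isRoot.mpr ha
  set q := minpoly k z /ₘ (X - C a) with hq
  have hfac : minpoly k z = (X - C a) * q := by
    rw [hq, eq_comm, mul_divByMonic_eq_iff_isRoot]; exact ha
  have hqmon : q.Monic := by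
    have := hmon
    rw [hfac] at this
    exact (monic_X_sub_C a).of_mul_monic_left this
  have hqdeg : q.natDegree = 1 := by
    have h2 : (minpoly k z).natDegree = (X - C a).natDegree + q.natDegree := by
      rw [hfac]; exact natDegree_mul (monic_X_sub_C a).ne_zero hqmon.ne_zero
    rw [hz, natDegree_X_sub_C] at h2
    omega
  have hqeq : q = X - C (-(q.coeff 0)) := by
    simpa using hqmon.eq_X_add_C hqdeg
  refine ⟨a, -(q.coeff 0), ?_, ?_⟩
  · intro h0
    have : (aeval z) (X - C a) = 0 := by rw [map_sub, aeval_X, aeval_C]; exact h0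
    have hmin := minpoly.min k z (monic_X_sub_C a) this
    rw [hdeg, degree_X_sub_C] at hmin
    exact absurd hmin (by norm_num)
  · have h0 : (aeval z) (minpoly k z) = 0 := minpoly.aeval k z
    rw [hfac, hqeq, mul_comm] at h0
    simpa [Algebra.algebraMap_eq_smul_one, sub_mul, mul_sub] using h0

theorem stmt_2 {k V : Type*} [Field k] [IsAlgClosed k] [AddCommGroup V] [Module k V]
    [FiniteDimensional k V] (n : ℕ) (hn : finrank k V = n) (hn2 : 2 < n)
    (x y : (V →ₗ[k] V)ˣ)
    (hx : (minpoly k ((x : V →ₗ[k] V))).natDegree = 2)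
    (hy : (minpoly k ((y : V →ₗ[k] V))).natDegree = 2) :
    ∃ W : Submodule k V, W ≠ ⊥ ∧ W ≠ ⊤ ∧
      Submodule.map (x : V →ₗ[k] V) W = W ∧
      Submodule.map (y : V →ₗ[k] V) W = W := by
  haveI : Nontrivial V := nontrivial_of_finrank_pos (R := k) (by omega)
  haveI : Nontrivial (V →ₗ[k] V) := ⟨1, 0, fun h => by
    obtain ⟨z, hz⟩ := exists_ne (0 : V)
    exact hz (by simpa using congrArg (fun f : V →ₗ[k] V => f z) h)⟩
  obtain ⟨a, b, hu0, hub⟩ := quad_factor (k := k) (x : V →ₗ[k] V) hx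
  obtain ⟨c, d, hv0, hvd⟩ := quad_factor (k := k) (y : V →ₗ[k] V) hy
  set u : V →ₗ[k] V := (x : V →ₗ[k] V) - algebraMap k _ a with hu
  set v : V →ₗ[k] V := (y : V →ₗ[k] V) - algebraMap k _ c with hv
  -- key relations: x ∘ u = b • u, y ∘ v = d • v
  have hxu : ∀ z : V, (x : V →ₗ[k] V) (u z) = b • (u z) := by
    intro z
    have := congrArg (fun f : V →ₗ[k] V => f z) hub
    simp only [LinearMap.zero_apply] at this
    have h2 : ((x : V →ₗ[k] V) * u) z - (algebraMap k (V →ₗ[k] V) b * u) z = 0 := by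
      rw [← LinearMap.sub_apply, ← sub_mul]; exact this
    have := sub_eq_zero.mp h2
    simpa [Module.End.mul_apply, Algebra.algebraMap_eq_smul_one] using this
  have hyv : ∀ z : V, (y : V →ₗ[k] V) (v z) = d • (v z) := by
    intro z
    have := congrArg (fun f : V →ₗ[k] V => f z) hvd
    simp only [LinearMap.zero_apply] at this
    have h2 : ((y : V →ₗ[k] V) * v) z - (algebraMap k (V →ₗ[k] V) d * v) z = 0 := by
      rw [← LinearMap.sub_apply, ← sub_mul]; exact this
    have := sub_eq_zero.mp h2
    simpa [Module.End.mul_apply, Algebra.algebraMap_eq_smul_one] using this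
  -- eigenvector of u ∘ v on range u
  have hrange : LinearMap.range u ≠ ⊥ := by
    rwa [ne_eq, LinearMap.range_eq_bot]
  have hntE : Nontrivial (LinearMap.range u) := Submodule.nontrivial_iff_ne_bot.mpr hrange
  have hmaps : ∀ z ∈ LinearMap.range u, (u ∘ₗ v) z ∈ LinearMap.range u := by
    intro z _; exact ⟨v z, rfl⟩
  set f : Module.End k (LinearMap.range u) := (u ∘ₗ v).restrict hmaps with hf
  obtain ⟨μ, hμ⟩ := Module.End.exists_eigenvalue f
  obtain ⟨w, hw⟩ := hμ.exists_hasEigenvector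
  set w0 : V := (w : V) with hw0
  have hw0ne : w0 ≠ 0 := fun h => hw.2 (Subtype.ext h)
  have hw0mem : w0 ∈ LinearMap.range u := w.2
  have heig : u (v w0) = μ • w0 := by
    have := hw.apply_eq_smul
    have := congrArg (Subtype.val) this
    simpa [f, LinearMap.restrict_apply] using this
  set W : Submodule k V := Submodule.span k {w0, v w0} with hW
  have hw0W : w0 ∈ W := Submodule.subset_span (by simp)
  have hvwW : v w0 ∈ W := Submodule.subset_span (by simp)
  -- x-action
  have hxw0 : (x : V →ₗ[k] V) w0 = b • w0 := by
    obtain ⟨z, hz⟩ := hw0mem; rw [← hz]; exact hxu z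
  have hxvw : (x : V →ₗ[k] V) (v w0) = μ • w0 + a • (v w0) := by
    have : (x : V →ₗ[k] V) = u + algebraMap k _ a := by rw [hu]; abel
    rw [this]
    simp [heig, Algebra.algebraMap_eq_smul_one]
  have hyw0 : (y : V →ₗ[k] V) w0 = v w0 + c • w0 := by
    have : (y : V →ₗ[k] V) = v + algebraMap k _ c := by rw [hv]; abel
    rw [this]; simp [Algebra.algebraMap_eq_smul_one]
  have hyvw : (y : V →ₗ[k] V) (v w0) = d • (v w0) := hyv w0
  -- invariance (≤) for both
  have hxle : Submodule.map (x : V →ₗ[k] V) W ≤ W := by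
    rw [hW, Submodule.map_span, Submodule.span_le]
    rintro _ ⟨z, hz, rfl⟩
    rcases hz with rfl | rfl
    · rw [hxw0]; exact W.smul_mem _ hw0W
    · rw [hxvw]; exact W.add_mem (W.smul_mem _ hw0W) (W.smul_mem _ hvwW)
  have hyle : Submodule.map (y : V →ₗ[k] V) W ≤ W := by
    rw [hW, Submodule.map_span, Submodule.span_le]
    rintro _ ⟨z, hz, rfl⟩
    rcases hz with rfl | rfl
    · rw [hyw0]; exact W.add_mem hvwW (W.smul_mem _ hw0W)
    · rw [hyvw]; exact W.smul_mem _ hvwW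
  -- units give equalities
  have hmapeq : ∀ g : (V →ₗ[k] V)ˣ, Submodule.map (g : V →ₗ[k] V) W ≤ W →
      Submodule.map (g : V →ₗ[k] V) W = W := by
    intro g hle
    have hfr := LinearEquiv.finrank_map_eq (LinearMap.GeneralLinearGroup.toLinearEquiv g) W
    have hcoe : ((LinearMap.GeneralLinearGroup.toLinearEquiv g : V ≃ₗ[k] V) : V →ₗ[k] V)
        = (g : V →ₗ[k] V) := rfl
    rw [hcoe] at hfr
    exact Submodule.eq_of_le_of_finrank_le hle hfr.ge
  refine ⟨W, ?_, ?_, hmapeq x hxle, hmapeq y hyle⟩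
  · intro h; rw [h] at hw0W; exact hw0ne (by simpa using hw0W)
  · intro h
    have h2 : finrank k W ≤ 2 := by
      have hsp : W = (k ∙ w0) ⊔ (k ∙ v w0) := by
        rw [hW, Submodule.span_insert]
      rw [hsp]
      have h3 := Submodule.finrank_sup_add_finrank_inf_eq (k ∙ w0) (k ∙ v w0)
      have h4 : finrank k (k ∙ w0) ≤ 1 := finrank_span_le_card ({w0} : Set V) |>.trans (by simp)
      have h5 : finrank k (k ∙ v w0) ≤ 1 := finrank_span_le_card ({v w0} : Set V) |>.trans (by simp)
      omega
    rw [h, finrank_top, hn] at h2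
    omega
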